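/- arXiv:2004.00551 — 5 statements merged into one kernel-verified Lean document; each statement's English description precedes it below -/
import Mathlib

section
/- Let L be an n-dimensional complex Lie algebra with ordered basis x_1,…,x_n and let φ be a Lie algebra automorphism of L with matrix representation B_φ = (b_{ij}) determined by φ(x_i) = Σ_j b_{ij} x_j. Then for all (z_0,z_1,…,z_n) ∈ ℂ^{n+1}, Q_L(z_0, z') = Q_L(z_0, z'B_φ), where z' = (z_1,…,z_n) and z'B_φ denotes the row vector obtained by right multiplication by B_φ. -/
/-!
With `w = ∑ zᵢ xᵢ`, the operator `z₀ • id + ∑ zᵢ • ad xᵢ` is `z₀ • id + ad w`, and `φ w` has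
coordinates `z B`. Since `ad (φ w) = φ ∘ ad w ∘ φ⁻¹`, the two operators are conjugate and so have
the same determinant.
-/

namespace LieAlgebra

variable {R L L' : Type*} [CommRing R] [LieRing L] [LieAlgebra R L] [LieRing L'] [LieAlgebra R L']

theorem det_smul_id_add_ad_lieEquiv_apply (e : L ≃ₗ⁅R⁆ L') (c : R) (w : L) :
    LinearMap.det (c • LinearMap.id + ad R L' (e w)) =
      LinearMap.det (c • LinearMap.id + ad R L w) := by
  rw [← conj_ad_apply, ← e.toLinearEquiv.conj_id, ← map_smul, ← map_add, LinearEquiv.conj_apply,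
    LinearMap.comp_assoc, LinearMap.det_conj]

end LieAlgebra

theorem Matrix.sum_vecMul_smul {ι R M : Type*} [Fintype ι] [CommSemiring R] [AddCommMonoid M]
    [Module R M] (z : ι → R) (B : Matrix ι ι R) (v : ι → M) :
    ∑ j, Matrix.vecMul z B j • v j = ∑ i, z i • ∑ j, B i j • v j := by
  simp only [Matrix.vecMul, dotProduct, Finset.sum_smul, Finset.smul_sum, smul_smul]
  exact Finset.sum_comm

/-- The characteristic polynomial of a finite-dimensional complex Lie algebra is
invariant under its automorphism group: if `φ ∈ Aut(L)` has matrix representation `B_φ`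
(given by `φ(xᵢ) = ∑ⱼ bᵢⱼ xⱼ`), then `Q_L(z₀, z') = Q_L(z₀, z'B_φ)`. -/
theorem stmt1 {n : ℕ} {L : Type*} [LieRing L] [LieAlgebra ℂ L]
    (x : Module.Basis (Fin n) ℂ L) (φ : L ≃ₗ⁅ℂ⁆ L)
    (B : Matrix (Fin n) (Fin n) ℂ)
    (hB : ∀ i, φ (x i) = ∑ j, B i j • x j) :
    ∀ (z0 : ℂ) (z : Fin n → ℂ),
      LinearMap.det (z0 • (LinearMap.id : L →ₗ[ℂ] L)
          + ∑ i, z i • LieAlgebra.ad ℂ L (x i)) =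
      LinearMap.det (z0 • (LinearMap.id : L →ₗ[ℂ] L)
          + ∑ i, (Matrix.vecMul z B) i • LieAlgebra.ad ℂ L (x i)) := by
  intro z0 z
  have ad_sum_smul : ∀ c : Fin n → ℂ,
      ∑ i, c i • LieAlgebra.ad ℂ L (x i) = LieAlgebra.ad ℂ L (∑ i, c i • x i) := by
    intro c
    simp only [map_sum, map_smul]
  have hφ : φ (∑ i, z i • x i) = ∑ j, Matrix.vecMul z B j • x j := by
    simp only [map_sum, map_smul, hB, Matrix.sum_vecMul_smul]
  rw [ad_sum_smul, ad_sum_smul, ← hφ, LieAlgebra.det_smul_id_add_ad_lieEquiv_apply]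
end

section
/- Let L be a complex Lie algebra with basis H, X, Y satisfying [H,X] = 2X, [H,Y] = −2Y and [X,Y] = H (i.e., L ≅ sl(2,ℂ)), and let φ be a Lie algebra automorphism of L with matrix representation B_φ determined by φ applied to the ordered basis (H,X,Y). Then B_φ is a unitary matrix if and only if B_φ is either the diagonal matrix diag(1, α, \bar{α}) for some α ∈ ℂ with |α| = 1, or the matrix with first row (−1,0,0), second row (0,0,β), third row (0,\bar{β},0) for some β ∈ ℂ with |β| = 1. -/
open scoped ComplexConjugate Matrix

/-! If `B` is unitary, `Bᴴ = B⁻¹` is the matrix of `φ⁻¹`, so the rows of both `B` and `Bᴴ`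
satisfy the bracket relations of `sl(2)`. The `H`-coordinate of `φ⁅H, X⁆ = 2 φX`, compared with
the conjugated `X`-coordinate of `φ⁻¹⁅X, Y⁆ = φ⁻¹H`, gives `4 B₁₀ = B₁₀`; likewise `B₂₀ = 0`, so
`φ` preserves `span {X, Y}`. The remaining relations then force `φ H = ± H`, with `φ` fixing the
lines `ℂ X`, `ℂ Y` for the sign `+` and swapping them for `-`; unitarity of the resulting diagonal
or antidiagonal block puts its entries on the unit circle and makes them conjugate. -/

/-- Coordinates of `⁅x, y⁆` in a basis `(H, X, Y)` with `⁅H, X⁆ = 2X`, `⁅H, Y⁆ = -2Y`,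
`⁅X, Y⁆ = H`, see `lie_sum_smul_basis`. -/
def sl2Bracket {R : Type*} [CommRing R] (x y : Fin 3 → R) : Fin 3 → R :=
  ![x 1 * y 2 - x 2 * y 1, 2 * (x 0 * y 1 - x 1 * y 0), 2 * (x 2 * y 0 - x 0 * y 2)]

section

variable {R : Type*} [CommRing R] (x y : Fin 3 → R)

@[simp] theorem sl2Bracket_apply_zero : sl2Bracket x y 0 = x 1 * y 2 - x 2 * y 1 := rfl
@[simp] theorem sl2Bracket_apply_one : sl2Bracket x y 1 = 2 * (x 0 * y 1 - x 1 * y 0) := rfl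
@[simp] theorem sl2Bracket_apply_two : sl2Bracket x y 2 = 2 * (x 2 * y 0 - x 0 * y 2) := rfl

end

/-- The row `M i` holds the coordinates of the image of the `i`-th basis vector. -/
structure IsSl2EndMatrix {R : Type*} [CommRing R] (M : Matrix (Fin 3) (Fin 3) R) : Prop where
  bracket_zero_one : sl2Bracket (M 0) (M 1) = (2 : R) • M 1
  bracket_zero_two : sl2Bracket (M 0) (M 2) = (-2 : R) • M 2
  bracket_one_two : sl2Bracket (M 1) (M 2) = M 0

section Sl2Basis

variable {R L : Type*} [CommRing R] [LieRing L] [LieAlgebra R L] (b : Module.Basis (Fin 3) R L)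

theorem lie_sum_smul_basis (hHX : ⁅b 0, b 1⁆ = (2 : R) • b 1) (hHY : ⁅b 0, b 2⁆ = (-2 : R) • b 2)
    (hXY : ⁅b 1, b 2⁆ = b 0) (x y : Fin 3 → R) :
    ⁅∑ i, x i • b i, ∑ j, y j • b j⁆ = ∑ k, sl2Bracket x y k • b k := by
  have hXH : ⁅b 1, b 0⁆ = (-2 : R) • b 1 := by rw [← lie_skew, hHX, ← neg_smul]
  have hYH : ⁅b 2, b 0⁆ = (2 : R) • b 2 := by rw [← lie_skew, hHY, ← neg_smul, neg_neg]
  have hYX : ⁅b 2, b 1⁆ = -b 0 := by rw [← lie_skew, hXY]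
  simp only [Fin.sum_univ_three, lie_add, add_lie, lie_smul, smul_lie, lie_self, hHX, hHY, hXY,
    hXH, hYH, hYX, sl2Bracket_apply_zero, sl2Bracket_apply_one, sl2Bracket_apply_two]
  module

theorem isSl2EndMatrix_of_lieHom (hHX : ⁅b 0, b 1⁆ = (2 : R) • b 1)
    (hHY : ⁅b 0, b 2⁆ = (-2 : R) • b 2) (hXY : ⁅b 1, b 2⁆ = b 0) (ψ : L →ₗ⁅R⁆ L)
    (M : Matrix (Fin 3) (Fin 3) R) (hM : ∀ i, ψ (b i) = ∑ j, M i j • b j) : IsSl2EndMatrix M := by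
  have hbracket : ∀ p q : Fin 3, ∀ c : Fin 3 → R, ⁅b p, b q⁆ = ∑ k, c k • b k →
      sl2Bracket (M p) (M q) = ∑ k, c k • M k := by
    intro p q c hpq
    apply b.equivFun.symm.injective
    simp only [Module.Basis.equivFun_symm_apply]
    rw [← lie_sum_smul_basis b hHX hHY hXY, ← hM, ← hM, ← ψ.map_lie, hpq, map_sum]
    simp only [map_smul, hM, Finset.smul_sum, smul_smul, Finset.sum_apply, Pi.smul_apply,
      smul_eq_mul, Finset.sum_smul]
    exact Finset.sum_comm
  refine ⟨?_, ?_, ?_⟩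
  · simpa [Fin.sum_univ_three] using hbracket 0 1 ![0, 2, 0] (by simp [Fin.sum_univ_three, hHX])
  · simpa [Fin.sum_univ_three] using hbracket 0 2 ![0, 0, -2] (by simp [Fin.sum_univ_three, hHY])
  · simpa [Fin.sum_univ_three] using hbracket 1 2 ![1, 0, 0] (by simp [Fin.sum_univ_three, hXY])

end Sl2Basis

theorem LinearEquiv.symm_apply_basis_of_mul_eq_one {R M ι : Type*} [Semiring R] [AddCommMonoid M]
    [Module R M] [Fintype ι] [DecidableEq ι] (b : Module.Basis ι R M) (φ : M ≃ₗ[R] M)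
    {B C : Matrix ι ι R} (hB : ∀ i, φ (b i) = ∑ j, B i j • b j) (hCB : C * B = 1) (i : ι) :
    φ.symm (b i) = ∑ j, C i j • b j := by
  apply φ.injective
  simp only [LinearEquiv.apply_symm_apply, map_sum, map_smul, hB, Finset.smul_sum, smul_smul]
  rw [Finset.sum_comm]
  simp only [← Finset.sum_smul, ← Matrix.mul_apply, hCB, Matrix.one_apply, ite_smul, one_smul,
    zero_smul, Finset.sum_ite_eq, Finset.mem_univ, if_true]

namespace IsSl2EndMatrix

variable {K : Type*} [Field K] {B : Matrix (Fin 3) (Fin 3) K}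

theorem col_zero_eq_zero_of_conjTranspose [StarRing K] [CharZero K] (hB : IsSl2EndMatrix B)
    (hBH : IsSl2EndMatrix Bᴴ) : B 1 0 = 0 ∧ B 2 0 = 0 := by
  have hHX0 := congrFun hB.bracket_zero_one 0
  have hHY0 := congrFun hB.bracket_zero_two 0
  have hinvXY1 := congrArg star (congrFun hBH.bracket_one_two 1)
  have hinvXY2 := congrArg star (congrFun hBH.bracket_one_two 2)
  simp only [sl2Bracket_apply_zero, sl2Bracket_apply_one, sl2Bracket_apply_two, Pi.smul_apply,
    smul_eq_mul, Matrix.conjTranspose_apply, star_mul', star_ofNat, star_sub, star_star]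
    at hHX0 hHY0 hinvXY1 hinvXY2
  constructor
  · linear_combination (hinvXY1 - 2 * hHX0) / 3
  · linear_combination (hinvXY2 + 2 * hHY0) / 3

theorem row_zero_eq_zero_of_col_zero (hB : IsSl2EndMatrix B) (h10 : B 1 0 = 0)
    (h20 : B 2 0 = 0) : B 0 1 = 0 ∧ B 0 2 = 0 := by
  have hXY1 := congrFun hB.bracket_one_two 1
  have hXY2 := congrFun hB.bracket_one_two 2
  simp only [sl2Bracket_apply_one, sl2Bracket_apply_two] at hXY1 hXY2
  constructor
  · linear_combination -hXY1 + 2 * B 2 1 * h10 - 2 * B 1 1 * h20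
  · linear_combination -hXY2 + 2 * B 1 2 * h20 - 2 * B 2 2 * h10

theorem eq_zero_or_diag_or_antidiag [NeZero (2 : K)] (hB : IsSl2EndMatrix B) (h10 : B 1 0 = 0)
    (h20 : B 2 0 = 0) :
    B = 0 ∨ (∃ α δ : K, α * δ = 1 ∧ B = !![1, 0, 0; 0, α, 0; 0, 0, δ]) ∨
      (∃ β γ : K, β * γ = 1 ∧ B = !![-1, 0, 0; 0, 0, β; 0, γ, 0]) := by
  obtain ⟨h01, h02⟩ := hB.row_zero_eq_zero_of_col_zero h10 h20
  have hHX1 := congrFun hB.bracket_zero_one 1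
  have hHX2 := congrFun hB.bracket_zero_one 2
  have hHY1 := congrFun hB.bracket_zero_two 1
  have hHY2 := congrFun hB.bracket_zero_two 2
  have hXY0 := congrFun hB.bracket_one_two 0
  simp only [sl2Bracket_apply_zero, sl2Bracket_apply_one, sl2Bracket_apply_two, Pi.smul_apply,
    smul_eq_mul, h01, h02, h10, h20] at hHX1 hHX2 hHY1 hHY2 hXY0
  have cancel_two : ∀ x : K, 2 * x = 0 → x = 0 := fun x hx =>
    (mul_eq_zero.mp hx).resolve_left two_ne_zero
  have h11 : (B 0 0 - 1) * B 1 1 = 0 := cancel_two _ (by linear_combination hHX1)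
  have h12 : (B 0 0 + 1) * B 1 2 = 0 := cancel_two _ (by linear_combination -hHX2)
  have h21 : (B 0 0 + 1) * B 2 1 = 0 := cancel_two _ (by linear_combination hHY1)
  have h22 : (B 0 0 - 1) * B 2 2 = 0 := cancel_two _ (by linear_combination -hHY2)
  rw [Matrix.eta_fin_three B, h01, h02, h10, h20]
  by_cases hp : B 0 0 = 1
  · rw [cancel_two (B 1 2) (by linear_combination h12 - B 1 2 * hp),
      cancel_two (B 2 1) (by linear_combination h21 - B 2 1 * hp)] at hXY0 ⊢
    exact Or.inr (Or.inl ⟨B 1 1, B 2 2, by linear_combination hXY0 + hp, by rw [hp]⟩)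
  by_cases hn : B 0 0 = -1
  · rw [cancel_two (B 1 1) (by linear_combination -h11 + B 1 1 * hn),
      cancel_two (B 2 2) (by linear_combination -h22 + B 2 2 * hn)] at hXY0 ⊢
    exact Or.inr (Or.inr ⟨B 1 2, B 2 1, by linear_combination -hXY0 - hn, by rw [hn]⟩)
  have hp' : B 0 0 - 1 ≠ 0 := sub_ne_zero.mpr hp
  have hn' : B 0 0 + 1 ≠ 0 := fun h => hn (eq_neg_of_add_eq_zero_left h)
  rw [(mul_eq_zero.mp h11).resolve_left hp', (mul_eq_zero.mp h22).resolve_left hp',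
    (mul_eq_zero.mp h12).resolve_left hn', (mul_eq_zero.mp h21).resolve_left hn'] at hXY0 ⊢
  left
  rw [← hXY0]
  ext i j
  fin_cases i <;> fin_cases j <;> simp

end IsSl2EndMatrix

theorem RCLike.mul_conj_eq_one_iff {𝕜 : Type*} [RCLike 𝕜] (z : 𝕜) : z * conj z = 1 ↔ ‖z‖ = 1 := by
  rw [RCLike.mul_conj]
  norm_cast
  exact pow_eq_one_iff_of_nonneg (norm_nonneg z) two_ne_zero

section Unitary

variable {𝕜 : Type*} [RCLike 𝕜] {B : Matrix (Fin 3) (Fin 3) 𝕜}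

theorem IsSl2EndMatrix.eq_diag_or_antidiag_of_unitary (hB : IsSl2EndMatrix B)
    (hBH : IsSl2EndMatrix Bᴴ) (hU : B * Bᴴ = 1) :
    (∃ α : 𝕜, ‖α‖ = 1 ∧ B = !![1, 0, 0; 0, α, 0; 0, 0, conj α]) ∨
      (∃ β : 𝕜, ‖β‖ = 1 ∧ B = !![-1, 0, 0; 0, 0, β; 0, conj β, 0]) := by
  obtain ⟨h10, h20⟩ := hB.col_zero_eq_zero_of_conjTranspose hBH
  have hU11 := congrFun (congrFun hU 1) 1
  rcases hB.eq_zero_or_diag_or_antidiag h10 h20 with rfl | ⟨α, δ, hαδ, rfl⟩ | ⟨β, γ, hβγ, rfl⟩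
  · simp at hU
  · have hα : α * conj α = 1 := by simpa [Matrix.mul_apply, Fin.sum_univ_three] using hU11
    refine Or.inl ⟨α, (RCLike.mul_conj_eq_one_iff α).mp hα, ?_⟩
    rw [mul_left_cancel₀ (left_ne_zero_of_mul_eq_one hα) (hαδ.trans hα.symm)]
  · have hβ : β * conj β = 1 := by simpa [Matrix.mul_apply, Fin.sum_univ_three] using hU11
    refine Or.inr ⟨β, (RCLike.mul_conj_eq_one_iff β).mp hβ, ?_⟩
    rw [mul_left_cancel₀ (left_ne_zero_of_mul_eq_one hβ) (hβγ.trans hβ.symm)]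

theorem mul_conjTranspose_eq_one_of_diag_or_antidiag
    (h : (∃ α : 𝕜, ‖α‖ = 1 ∧ B = !![1, 0, 0; 0, α, 0; 0, 0, conj α]) ∨
      (∃ β : 𝕜, ‖β‖ = 1 ∧ B = !![-1, 0, 0; 0, 0, β; 0, conj β, 0])) :
    B * Bᴴ = 1 := by
  rcases h with ⟨z, hz, rfl⟩ | ⟨z, hz, rfl⟩ <;>
  · ext i j
    fin_cases i <;> fin_cases j <;>
      simp [Matrix.mul_apply, Fin.sum_univ_three, RCLike.mul_conj, hz]

end Unitary

/-- For `sl(2,ℂ)` with basis `(H, X, Y)` and an automorphism `φ` with matrix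
representation `B_φ`, the matrix `B_φ` is unitary if and only if it is `diag(1, α, conj α)`
for some unimodular `α`, or the matrix with rows `(-1,0,0)`, `(0,0,β)`, `(0,conj β,0)` for
some unimodular `β`. -/
theorem stmt7 {L : Type*} [LieRing L] [LieAlgebra ℂ L]
    (b : Module.Basis (Fin 3) ℂ L)
    (hHX : ⁅b 0, b 1⁆ = (2 : ℂ) • b 1)
    (hHY : ⁅b 0, b 2⁆ = (-2 : ℂ) • b 2)
    (hXY : ⁅b 1, b 2⁆ = b 0)
    (φ : L ≃ₗ⁅ℂ⁆ L)
    (B : Matrix (Fin 3) (Fin 3) ℂ)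
    (hB : ∀ i, φ (b i) = ∑ j, B i j • b j) :
    B * B.conjTranspose = 1 ↔
      ((∃ α : ℂ, ‖α‖ = 1 ∧ B = !![1, 0, 0; 0, α, 0; 0, 0, conj α]) ∨
       (∃ β : ℂ, ‖β‖ = 1 ∧ B = !![-1, 0, 0; 0, 0, β; 0, conj β, 0])) := by
  refine ⟨fun hU => ?_, mul_conjTranspose_eq_one_of_diag_or_antidiag⟩
  have hBinv : ∀ i, φ.symm (b i) = ∑ j, Bᴴ i j • b j :=
    LinearEquiv.symm_apply_basis_of_mul_eq_one b φ.toLinearEquiv hB (mul_eq_one_comm.mp hU)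
  exact (isSl2EndMatrix_of_lieHom b hHX hHY hXY φ B hB).eq_diag_or_antidiag_of_unitary
    (isSl2EndMatrix_of_lieHom b hHX hHY hXY φ.symm Bᴴ hBinv) hU
end

section
/- Let L be an n-dimensional complex Lie algebra with basis x_1,…,x_n. Then L is a nilpotent Lie algebra if and only if its characteristic polynomial satisfies det(z_0·id_L + z_1·ad x_1 + ⋯ + z_n·ad x_n) = z_0^n for all (z_0,z_1,…,z_n) ∈ ℂ^{n+1}. -/
/-! By Engel's theorem `L` is nilpotent iff every `ad y` is nilpotent, and over an infinite field
an endomorphism `f` is nilpotent iff the characteristic polynomial of `-f`, whose value at `z` is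
`det (z • id + f)`, equals `X ^ dim`. Writing `y = ∑ zᵢ xᵢ` gives `ad y = ∑ zᵢ ad xᵢ`. -/

open Polynomial in
theorem LinearMap.isNilpotent_iff_forall_det_smul_id_add_eq_pow {R M : Type*} [CommRing R]
    [IsDomain R] [Infinite R] [AddCommGroup M] [Module R M] [Module.Free R M] [Module.Finite R M]
    (f : Module.End R M) :
    IsNilpotent f ↔ ∀ z : R, (z • LinearMap.id + f).det = z ^ Module.finrank R M := by
  have eval_charpoly_neg (z : R) : (-f).charpoly.eval z = (z • LinearMap.id + f).det := by
    rw [LinearMap.eval_charpoly, Module.algebraMap_end_eq_smul_id, sub_neg_eq_add]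
  rw [← isNilpotent_neg_iff, LinearMap.isNilpotent_iff_charpoly]
  refine ⟨fun h z ↦ by rw [← eval_charpoly_neg, h, eval_pow, eval_X], fun h ↦ ?_⟩
  exact Polynomial.funext fun z ↦ by rw [eval_charpoly_neg, h, eval_pow, eval_X]

/-- An `n`-dimensional complex Lie algebra `L` with basis `x₁,…,xₙ` is nilpotent
if and only if its characteristic polynomial is `Q_L(z) = z₀ⁿ`. -/
theorem stmt16 {n : ℕ} {L : Type*} [LieRing L] [LieAlgebra ℂ L]
    (x : Module.Basis (Fin n) ℂ L) :
    LieRing.IsNilpotent L ↔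
      ∀ (z0 : ℂ) (z : Fin n → ℂ),
        LinearMap.det (z0 • (LinearMap.id : L →ₗ[ℂ] L)
            + ∑ i, z i • LieAlgebra.ad ℂ L (x i)) = z0 ^ n := by
  have : Module.Finite ℂ L := Module.Finite.of_basis x
  have ad_sum (z : Fin n → ℂ) :
      LieAlgebra.ad ℂ L (x.equivFun.symm z) = ∑ i, z i • LieAlgebra.ad ℂ L (x i) := by
    simp [Module.Basis.equivFun_symm_apply, map_sum, map_smul]
  rw [forall_comm, LieAlgebra.isNilpotent_iff_forall (R := ℂ), x.equivFun.symm.surjective.forall]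
  simp only [LinearMap.isNilpotent_iff_forall_det_smul_id_add_eq_pow, ad_sum,
    Module.finrank_eq_card_basis x, Fintype.card_fin]
end

section
/- Let L and L' be n-dimensional solvable complex Lie algebras (n ≥ 1). Suppose N is a nilpotent Lie ideal of L with dim_ℂ N = n−1 and x_n ∈ L with x_n ∉ N, and similarly N' is a nilpotent Lie ideal of L' with dim_ℂ N' = n−1 and x'_n ∈ L' with x'_n ∉ N' (so L and L' are 1-dimensional solvable extensions of nilpotent Lie algebras). If L and L' are isomorphic as Lie algebras, then there exists a nonzero scalar t ∈ ℂ such that the spectrum of ad_L x_n equals t times the spectrum of ad_{L'} x'_n, i.e., σ(ad x_n) = t·σ(ad x'_n) as subsets of ℂ. -/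
/-!
Fix `e : L ≃ₗ⁅ℂ⁆ L'` and write `e xₙ = c • x'ₙ + m'` with `m' ∈ N'`. By Engel's theorem the
nilpotent ideal `N'` acts nilpotently on `L'`, so the terms `N'ᵏ · L'` of its lower central series
form a flag of ideals of `L'` ending in `0`. Every `ad y` preserves this flag and `ad m'` lowers it,
so `ad (y + m')` and `ad y` have the same eigenvalues; hence `σ(ad xₙ) = c • σ(ad x'ₙ)`. When
`c = 0` both spectra are `{0}` (apply the same argument to `e.symm x'ₙ`) and `t = 1` works.
-/

open LieAlgebra
open scoped Pointwise

namespace Submodule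

variable {K V : Type*} [Field K] [AddCommGroup V] [Module K V] [FiniteDimensional K V]

theorem exists_eq_smul_add_of_finrank_eq_sub_one {p : Submodule K V}
    (hp : Module.finrank K p = Module.finrank K V - 1) {x : V} (hx : x ∉ p) (y : V) :
    ∃ c : K, ∃ m ∈ p, y = c • x + m := by
  have hrank : Module.finrank K (p ⊔ span K {x} : Submodule K V) = Module.finrank K V := by
    have := (p ⊔ span K {x}).finrank_le
    rw [finrank_sup_span_singleton hx] at this ⊢
    omega
  have hy : y ∈ p ⊔ span K {x} := by
    rw [eq_top_of_finrank_eq hrank]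
    exact mem_top
  obtain ⟨m, hm, _, hs, rfl⟩ := mem_sup.mp hy
  obtain ⟨c, rfl⟩ := mem_span_singleton.mp hs
  exact ⟨c, m, hm, add_comm _ _⟩

theorem mem_of_injective_of_apply_mem {W : Submodule K V} {h : Module.End K V}
    (hinj : Function.Injective h) (hW : ∀ w ∈ W, h w ∈ W) {v : V} (hv : h v ∈ W) : v ∈ W := by
  have hsurj : Function.Surjective (h.restrict hW) :=
    LinearMap.injective_iff_surjective.mp fun a b hab => Subtype.ext (hinj congr($hab.1))
  obtain ⟨⟨u, hu⟩, hhu⟩ := hsurj ⟨h v, hv⟩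
  exact hinj congr($hhu.1) ▸ hu

end Submodule

namespace Module.End

variable {K V : Type*} [Field K] [AddCommGroup V] [Module K V] [FiniteDimensional K V]

theorem HasEigenvalue.of_sub_mem_succ {f g : End K V} (W : ℕ → Submodule K V) {r : ℕ}
    (hW₀ : W 0 = ⊤) (hWr : W r = ⊥) (hg : ∀ k, ∀ v ∈ W k, g v ∈ W k)
    (hfg : ∀ k, ∀ v ∈ W k, f v - g v ∈ W (k + 1)) {μ : K} (hf : f.HasEigenvalue μ) :
    g.HasEigenvalue μ := by
  by_contra hgμ
  have hinj : Function.Injective (g - μ • (1 : End K V)) :=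
    LinearMap.ker_eq_bot.mp (by simpa [hasEigenvalue_iff, eigenspace_def] using hgμ)
  obtain ⟨v, hv⟩ := hf.exists_hasEigenvector
  have hvW : ∀ k, v ∈ W k := by
    intro k
    induction k with
    | zero => simp [hW₀]
    | succ k ih =>
      refine Submodule.mem_of_injective_of_apply_mem hinj
        (fun w hw => sub_mem (hg _ w hw) ((W _).smul_mem μ hw)) ?_
      have : (g - μ • (1 : End K V)) v = -(f v - g v) := by simp [hv.apply_eq_smul]
      exact this ▸ neg_mem (hfg k v ih)
  exact hv.2 (by simpa [hWr] using hvW r)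

end Module.End

section

variable {R L : Type*} [CommRing R] [LieRing L] [LieAlgebra R L]

theorem LieEquiv.spectrum_ad_apply {L' : Type*} [LieRing L'] [LieAlgebra R L']
    (e : L ≃ₗ⁅R⁆ L') (x : L) : spectrum R (ad R L' (e x)) = spectrum R (ad R L x) := by
  rw [← conj_ad_apply]
  exact AlgEquiv.spectrum_eq (e.toLinearEquiv.conjAlgEquiv R) _

namespace LieIdeal

variable (N : LieIdeal R L) [LieModule.IsNilpotent N N]

theorem isNilpotent_ad_of_mem {m : L} (hm : m ∈ N) : IsNilpotent (ad R L m) := by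
  obtain ⟨k, hk⟩ := LieModule.isNilpotent_toEnd_of_isNilpotent R N N ⟨m, hm⟩
  refine ⟨k + 1, LinearMap.ext fun v => ?_⟩
  have := LieSubalgebra.coe_ad_pow R L N ⟨m, hm⟩ ⟨⁅m, v⁆, lie_mem_left R L N m v hm⟩ k
  rw [pow_succ, Module.End.mul_apply]
  exact this.symm.trans (congrArg Subtype.val (LinearMap.congr_fun hk _))

instance isNilpotent_of_isNilpotent_self [IsNoetherian R L] : LieModule.IsNilpotent N L := by
  rw [LieModule.isNilpotent_iff_forall' (R := R)]
  rintro ⟨m, hm⟩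
  exact N.isNilpotent_ad_of_mem hm

theorem exists_lcs_eq_bot [IsNoetherian R L] : ∃ k, N.lcs L k = ⊥ := by
  obtain ⟨k, hk⟩ := LieModule.IsNilpotent.nilpotent R N L
  exact ⟨k, LieSubmodule.toSubmodule_injective (by simpa [coe_lcs_eq] using hk)⟩

end LieIdeal

end

namespace LieIdeal

variable {K L : Type*} [Field K] [LieRing L] [LieAlgebra K L] [FiniteDimensional K L]
  (N : LieIdeal K L) [LieModule.IsNilpotent N N]

theorem hasEigenvalue_ad_of_hasEigenvalue_ad_add (y : L) {m : L} (hm : m ∈ N) {μ : K}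
    (h : (ad K L (y + m)).HasEigenvalue μ) : (ad K L y).HasEigenvalue μ := by
  obtain ⟨r, hr⟩ := N.exists_lcs_eq_bot
  refine h.of_sub_mem_succ (fun k => N.lcs L k) (r := r) (by simp) (by simp [hr])
    (fun k v hv => (N.lcs L k).lie_mem hv) fun k v hv => ?_
  simpa [lcs_succ] using LieSubmodule.lie_mem_lie hm hv

theorem spectrum_ad_add_of_mem (y : L) {m : L} (hm : m ∈ N) :
    spectrum K (ad K L (y + m)) = spectrum K (ad K L y) := by
  ext μ
  simp only [← Module.End.hasEigenvalue_iff_mem_spectrum]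
  refine ⟨N.hasEigenvalue_ad_of_hasEigenvalue_ad_add y hm, fun h => ?_⟩
  exact N.hasEigenvalue_ad_of_hasEigenvalue_ad_add (y + m) (neg_mem hm) (by simpa using h)

end LieIdeal

theorem LieEquiv.spectrum_ad_eq_smul_of_apply_eq_smul_add {K L L' : Type*} [Field K]
    [IsAlgClosed K] [LieRing L] [LieAlgebra K L] [LieRing L'] [LieAlgebra K L']
    [FiniteDimensional K L'] [Nontrivial L'] (e : L ≃ₗ⁅K⁆ L') (N' : LieIdeal K L')
    [LieModule.IsNilpotent N' N']
    {x : L} {x' : L'} {c : K} {m' : L'} (hm' : m' ∈ N') (he : e x = c • x' + m') :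
    spectrum K (ad K L x) = c • spectrum K (ad K L' x') := by
  rw [← e.spectrum_ad_apply, he, N'.spectrum_ad_add_of_mem _ hm', map_smul,
    spectrum.smul_eq_smul _ _ (spectrum.nonempty_of_isAlgClosed_of_finiteDimensional K _)]

theorem stmt18_general {n : ℕ} {L L' : Type*}
    [LieRing L] [LieAlgebra ℂ L]
    [LieRing L'] [LieAlgebra ℂ L']
    (hdim : Module.finrank ℂ L = n) (hdim' : Module.finrank ℂ L' = n)
    [FiniteDimensional ℂ L] [FiniteDimensional ℂ L']
    (N : LieIdeal ℂ L) (hNnil : LieModule.IsNilpotent N N)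
    (hNdim : Module.finrank ℂ N = n - 1)
    (xn : L) (hxn : xn ∉ N)
    (N' : LieIdeal ℂ L') (hN'nil : LieModule.IsNilpotent N' N')
    (hN'dim : Module.finrank ℂ N' = n - 1)
    (xn' : L') (hxn' : xn' ∉ N')
    (hiso : Nonempty (L ≃ₗ⁅ℂ⁆ L')) :
    ∃ t : ℂ, t ≠ 0 ∧
      {μ : ℂ | Module.End.HasEigenvalue (LieAlgebra.ad ℂ L xn) μ} =
        (fun s => t * s) '' {μ : ℂ | Module.End.HasEigenvalue (LieAlgebra.ad ℂ L' xn') μ} := by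
  obtain ⟨e⟩ := hiso
  have : Nontrivial L := nontrivial_of_ne xn 0 fun h => hxn (h ▸ N.zero_mem)
  have : Nontrivial L' := nontrivial_of_ne xn' 0 fun h => hxn' (h ▸ N'.zero_mem)
  obtain ⟨c, m', hm', he⟩ := (N' : Submodule ℂ L').exists_eq_smul_add_of_finrank_eq_sub_one
    (hN'dim.trans (by rw [hdim'])) hxn' (e xn)
  obtain ⟨d, m, hm, he'⟩ := (N : Submodule ℂ L).exists_eq_smul_add_of_finrank_eq_sub_one
    (hNdim.trans (by rw [hdim])) hxn (e.symm xn')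
  have hσ := e.spectrum_ad_eq_smul_of_apply_eq_smul_add N' hm' he
  have hσ' := e.symm.spectrum_ad_eq_smul_of_apply_eq_smul_add N hm he'
  simp only [Module.End.hasEigenvalue_iff_mem_spectrum, Set.ofPred_mem_eq, ← smul_eq_mul,
    Set.image_smul]
  by_cases hc : c = 0
  · refine ⟨1, one_ne_zero, ?_⟩
    rw [hσ', hσ, hc,
      Set.zero_smul_set (spectrum.nonempty_of_isAlgClosed_of_finiteDimensional ℂ _)]
    simp
  · exact ⟨c, hc, hσ⟩

/-- If `L` and `L'` are `n`-dimensional solvable complex Lie algebras, each a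
1-dimensional extension of a nilpotent Lie algebra (`N` is a nilpotent ideal of `L` of
dimension `n-1` and `xₙ ∉ N`, similarly for `L'`), and `L ≅ L'`, then there is a nonzero scalar
`t` with `σ(ad xₙ) = t · σ(ad x'ₙ)`. -/
theorem stmt18 {n : ℕ} (hn : 1 ≤ n) {L L' : Type*}
    [LieRing L] [LieAlgebra ℂ L] [LieAlgebra.IsSolvable L]
    [LieRing L'] [LieAlgebra ℂ L'] [LieAlgebra.IsSolvable L']
    (hdim : Module.finrank ℂ L = n) (hdim' : Module.finrank ℂ L' = n)
    [FiniteDimensional ℂ L] [FiniteDimensional ℂ L']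
    (N : LieIdeal ℂ L) (hNnil : LieModule.IsNilpotent N N)
    (hNdim : Module.finrank ℂ N = n - 1)
    (xn : L) (hxn : xn ∉ N)
    (N' : LieIdeal ℂ L') (hN'nil : LieModule.IsNilpotent N' N')
    (hN'dim : Module.finrank ℂ N' = n - 1)
    (xn' : L') (hxn' : xn' ∉ N')
    (hiso : Nonempty (L ≃ₗ⁅ℂ⁆ L')) :
    ∃ t : ℂ, t ≠ 0 ∧
      {μ : ℂ | Module.End.HasEigenvalue (LieAlgebra.ad ℂ L xn) μ} =
        (fun s => t * s) '' {μ : ℂ | Module.End.HasEigenvalue (LieAlgebra.ad ℂ L' xn') μ} :=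
  stmt18_general hdim hdim' N hNnil hNdim xn hxn N' hN'nil hN'dim xn' hxn' hiso
end

section
/- Let L be an n-dimensional solvable complex Lie algebra with basis x_1,…,x_n whose characteristic polynomial factors as ∏_{j=1}^n (z_0 + Σ_{i=1}^n λ_{ij} z_i) with spectral matrix λ = (λ_{ij}), and let m = rank(λ). Then there exists a basis x̂_1,…,x̂_n of L and a subset S ⊆ {1,…,n} with |S| ≤ m such that the characteristic polynomial with respect to x̂, as a multivariate polynomial Q̂ ∈ ℂ[X_0,X_1,…,X_n], involves only the variables X_0 and X_i with i ∈ S (i.e., every variable occurring in Q̂ lies in {X_0} ∪ {X_i : i ∈ S}). -/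
/-!
Under the change of basis `x̂ᵢ = ∑ⱼ bᵢⱼ xⱼ` the linear pencil `z₀ + ∑ zᵢ ad xᵢ` is reparametrised
linearly, so the spectral matrix becomes `b * λ`. Choosing all rows of `b` outside a set `S` of
`rank λ` indices in the left kernel of `λ` makes the corresponding rows of `b * λ` vanish, so the
variables `Xᵢ`, `i ∉ S`, occur in no linear factor. Over the infinite field `ℂ` a polynomial is
determined by its values, so this factorization is the characteristic polynomial itself.
-/

open Module Matrix MvPolynomial

theorem LinearMap.exists_basis_finset_card_eq_finrank_range_of_apply_eq_zero
    {K V W : Type*} [Field K] [AddCommGroup V] [Module K V] [FiniteDimensional K V]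
    [AddCommGroup W] [Module K W] (f : V →ₗ[K] W) {n : ℕ} (hn : finrank K V = n) :
    ∃ (b : Basis (Fin n) K V) (S : Finset (Fin n)),
      S.card = finrank K (range f) ∧ ∀ i ∉ S, f (b i) = 0 := by
  obtain ⟨C, hC⟩ := (ker f).exists_isCompl
  have hdim : finrank K C + finrank K (ker f) = n := by
    rw [Submodule.finrank_add_eq_of_isCompl hC.symm, hn]
  have hC_range : finrank K C = finrank K (range f) := by
    have := finrank_range_add_finrank_ker f
    omega
  let e : Fin (finrank K C) ⊕ Fin (finrank K (ker f)) ≃ Fin n :=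
    finSumFinEquiv.trans (finCongr hdim)
  let b : Basis (Fin n) K V :=
    (((finBasis K C).prod (finBasis K (ker f))).map
      (Submodule.prodEquivOfIsCompl C (ker f) hC.symm)).reindex e
  refine ⟨b, Finset.univ.map ⟨e ∘ Sum.inl, e.injective.comp Sum.inl_injective⟩, ?_, ?_⟩
  · simp [hC_range]
  · intro i hi
    obtain ⟨j | j, rfl⟩ := e.surjective i
    · exact absurd (Finset.mem_map_of_mem _ (Finset.mem_univ j)) hi
    · simp [b]

theorem Matrix.exists_basis_finset_card_eq_rank_of_vecMul_eq_zero
    {K : Type*} [Field K] {n : ℕ} (A : Matrix (Fin n) (Fin n) K) :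
    ∃ (b : Basis (Fin n) K (Fin n → K)) (S : Finset (Fin n)),
      S.card = A.rank ∧ ∀ i ∉ S, b i ᵥ* A = 0 := by
  obtain ⟨b, S, hS, hb⟩ :=
    Aᵀ.mulVecLin.exists_basis_finset_card_eq_finrank_range_of_apply_eq_zero
      (finrank_fin_fun K)
  refine ⟨b, S, by rw [hS, ← A.rank_transpose]; rfl, fun i hi => ?_⟩
  rw [← mulVec_transpose]
  exact hb i hi

theorem MvPolynomial.eval_det_linearPencil {R V ι : Type*} [CommRing R] [AddCommGroup V]
    [Module R V] [Fintype ι] [DecidableEq ι] (b : Basis ι R V) {n : ℕ}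
    (T : Fin n → Module.End R V) (w : Fin (n + 1) → R) :
    eval w (det ((X 0 : MvPolynomial (Fin (n + 1)) R) • (1 : Matrix ι ι _)
        + ∑ i : Fin n, (X i.succ : MvPolynomial (Fin (n + 1)) R) •
            (LinearMap.toMatrix b b (T i)).map C)) =
      LinearMap.det (w 0 • LinearMap.id + ∑ i, w i.succ • T i) := by
  rw [RingHom.map_det, ← LinearMap.det_toMatrix b]
  congr 1
  ext k l
  simp [Matrix.sum_apply, one_apply, apply_ite (eval w)]

namespace LieAlgebra

section SpectralMatrix

variable {R L : Type*} [CommRing R] [LieRing L] [LieAlgebra R L]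
  {ι κ : Type*} [Fintype ι] [Fintype κ]

def HasSpectralMatrix (x : ι → L) (lam : Matrix ι κ R) : Prop :=
  ∀ (z0 : R) (z : ι → R), LinearMap.det (z0 • (LinearMap.id : L →ₗ[R] L)
      + ∑ i, z i • ad R L (x i)) = ∏ j, (z0 + ∑ i, lam i j * z i)

theorem HasSpectralMatrix.mul_left {x : ι → L} {lam : Matrix ι κ R}
    (h : HasSpectralMatrix x lam) {ι' : Type*} [Fintype ι'] (B : Matrix ι' ι R) :
    HasSpectralMatrix (fun i' => ∑ i, B i' i • x i) (B * lam) := by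
  intro z0 z
  have hpencil :
      ∑ i', z i' • ad R L (∑ i, B i' i • x i) = ∑ i, (z ᵥ* B) i • ad R L (x i) := by
    simp only [map_sum, map_smul, Finset.smul_sum, smul_smul, vecMul, dotProduct,
      Finset.sum_smul]
    exact Finset.sum_comm
  have hcoeff (j : κ) : ∑ i, lam i j * (z ᵥ* B) i = ∑ i', (B * lam) i' j * z i' := by
    simpa [vecMul, dotProduct, mul_comm] using congrFun (vecMul_vecMul z B lam) j
  rw [hpencil, h]
  simp only [hcoeff]

end SpectralMatrix

theorem HasSpectralMatrix.vars_det_subset {K L : Type*} [Field K] [Infinite K]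
    [LieRing L] [LieAlgebra K L] {n : ℕ} {x : Module.Basis (Fin n) K L}
    {lam : Matrix (Fin n) (Fin n) K} (h : HasSpectralMatrix x lam) {S : Finset (Fin n)}
    (hS : ∀ i ∉ S, ∀ j, lam i j = 0) :
    (det ((X 0 : MvPolynomial (Fin (n + 1)) K) • (1 : Matrix (Fin n) (Fin n) _)
        + ∑ i : Fin n, (X i.succ : MvPolynomial (Fin (n + 1)) K) •
            (LinearMap.toMatrix x x (ad K L (x i))).map C)).vars ⊆
      insert 0 (S.image Fin.succ) := by
  have hfactor : det ((X 0 : MvPolynomial (Fin (n + 1)) K) • (1 : Matrix (Fin n) (Fin n) _)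
        + ∑ i : Fin n, (X i.succ : MvPolynomial (Fin (n + 1)) K) •
            (LinearMap.toMatrix x x (ad K L (x i))).map C) =
      ∏ j, (X 0 + ∑ i, C (lam i j) * X i.succ) := by
    refine MvPolynomial.funext fun w => ?_
    rw [eval_det_linearPencil, h]
    simp
  rw [hfactor, ← Finset.coe_subset, ← mem_supported]
  refine Subalgebra.prod_mem _ fun j _ => add_mem (X_mem_supported.2 (by simp))
    (Subalgebra.sum_mem _ fun i _ => ?_)
  by_cases hi : i ∈ S
  · exact Subalgebra.mul_mem _ (Subalgebra.algebraMap_mem _ _)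
      (X_mem_supported.2 (by simp [hi]))
  · simp [hS i hi]

end LieAlgebra

theorem stmt19_general {n : ℕ} {L : Type*} [LieRing L] [LieAlgebra ℂ L]
    (x : Module.Basis (Fin n) ℂ L)
    (lam : Matrix (Fin n) (Fin n) ℂ)
    (hfac : ∀ (z0 : ℂ) (z : Fin n → ℂ),
      LinearMap.det (z0 • (LinearMap.id : L →ₗ[ℂ] L)
          + ∑ i, z i • LieAlgebra.ad ℂ L (x i)) =
        ∏ j, (z0 + ∑ i, lam i j * z i)) :
    ∃ (xhat : Module.Basis (Fin n) ℂ L) (S : Finset (Fin n)), S.card ≤ lam.rank ∧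
      (Matrix.det
          ((MvPolynomial.X (0 : Fin (n + 1)) : MvPolynomial (Fin (n + 1)) ℂ) •
              (1 : Matrix (Fin n) (Fin n) (MvPolynomial (Fin (n + 1)) ℂ))
            + ∑ i : Fin n, (MvPolynomial.X i.succ : MvPolynomial (Fin (n + 1)) ℂ) •
                ((LinearMap.toMatrix xhat xhat (LieAlgebra.ad ℂ L (xhat i))).map
                  MvPolynomial.C))).vars ⊆
        insert (0 : Fin (n + 1)) (S.image Fin.succ) := by
  obtain ⟨b, S, hS, hb⟩ := lam.exists_basis_finset_card_eq_rank_of_vecMul_eq_zero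
  let xhat : Module.Basis (Fin n) ℂ L := b.map x.equivFun.symm
  have hxhat : ⇑xhat = fun i => ∑ j, b i j • x j := by
    ext i
    simp [xhat, Basis.equivFun_symm_apply]
  have hspec : LieAlgebra.HasSpectralMatrix xhat (Matrix.of (fun i j => b i j) * lam) :=
    hxhat ▸ LieAlgebra.HasSpectralMatrix.mul_left hfac _
  exact ⟨xhat, S, hS.le, hspec.vars_det_subset fun i hi j => congrFun (hb i hi) j⟩

/-- For an `n`-dimensional solvable complex Lie algebra `L` whose characteristic
polynomial factors with spectral matrix `λ` of rank `m`, there is a basis `x̂` of `L` and a set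
`S` of at most `m` indices such that the characteristic polynomial with respect to `x̂`, as a
multivariate polynomial, only involves the variables `X₀` and `Xᵢ`, `i ∈ S`. -/
theorem stmt19 {n : ℕ} {L : Type*} [LieRing L] [LieAlgebra ℂ L]
    [LieAlgebra.IsSolvable L]
    (x : Module.Basis (Fin n) ℂ L)
    (lam : Matrix (Fin n) (Fin n) ℂ)
    (hfac : ∀ (z0 : ℂ) (z : Fin n → ℂ),
      LinearMap.det (z0 • (LinearMap.id : L →ₗ[ℂ] L)
          + ∑ i, z i • LieAlgebra.ad ℂ L (x i)) =
        ∏ j, (z0 + ∑ i, lam i j * z i)) :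
    ∃ (xhat : Module.Basis (Fin n) ℂ L) (S : Finset (Fin n)), S.card ≤ lam.rank ∧
      (Matrix.det
          ((MvPolynomial.X (0 : Fin (n + 1)) : MvPolynomial (Fin (n + 1)) ℂ) •
              (1 : Matrix (Fin n) (Fin n) (MvPolynomial (Fin (n + 1)) ℂ))
            + ∑ i : Fin n, (MvPolynomial.X i.succ : MvPolynomial (Fin (n + 1)) ℂ) •
                ((LinearMap.toMatrix xhat xhat (LieAlgebra.ad ℂ L (xhat i))).map
                  MvPolynomial.C))).vars ⊆
        insert (0 : Fin (n + 1)) (S.image Fin.succ) :=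
  stmt19_general x lam hfac
end
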